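/- arXiv:1302.0639 — 6 statements merged into one kernel-verified Lean document; each statement's English description precedes it below -/
import Mathlib

section
/- For every f ∈ ker D, the image Π*(f) lies in the subring 𝕜[x_{0,j} : 1 ≤ j ≤ l] of R′; that is, Π*(f) involves only the variables x_{0,j} for those indices j with n_j even. -/
/-!
Give `x_{i,j}` the weight `n_j - 2i`. The derivation `D` raises weights by `2`, the derivation
`F : x_{i,j} ↦ (i+1)(n_j-i) x_{i+1,j}` lowers them by `2`, and `⁅D, F⁆` is the weighted Euler
derivation `H`; so `(H, D, F)` is an `sl₂`-triple, and `F` is locally nilpotent since it lowers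
the nonnegative weight `n_j - i` by `1`. Each weighted homogeneous component of an element of
`ker D` is therefore a primitive vector on which `F` is nilpotent, so its weight is a natural
number. Finally `Π*` kills exactly the variables of positive weight, so a monomial of nonnegative
weight survives only if all its variables have weight `0`, i.e. are `x_{n_j/2,j}` with `n_j` even,
which `Π*` sends to `x_{0,j}`.
-/

open MvPolynomial Finset

variable (𝕜 : Type) [Field 𝕜] [CharZero 𝕜] (k : ℕ) (n : Fin k → ℕ)

/-- The variable `x_{i,j}` (as `X ⟨j,i⟩`), or `0` if `i` is out of range. -/
noncomputable def Xv (j : Fin k) (i : ℕ) : MvPolynomial (Σ j : Fin k, Fin (n j + 1)) 𝕜 :=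
  if h : i ≤ n j then MvPolynomial.X ⟨j, ⟨i, Nat.lt_succ_of_le h⟩⟩ else 0

/-- The Weitzenböck derivation `D` with `D x_{0,j} = 0` and `D x_{i,j} = x_{i-1,j}`. -/
noncomputable def Dw : Derivation 𝕜 (MvPolynomial (Σ j : Fin k, Fin (n j + 1)) 𝕜)
    (MvPolynomial (Σ j : Fin k, Fin (n j + 1)) 𝕜) :=
  mkDerivation 𝕜 fun v => if (v.2 : ℕ) = 0 then 0 else Xv 𝕜 k n v.1 ((v.2 : ℕ) - 1)

/-- The variable `x_{i,j}` of `R' = 𝕜[x_{i,j} : 0 ≤ i ≤ ⌊n_j/2⌋]`, or `0` if out of range. -/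
noncomputable def Xv' (j : Fin k) (i : ℕ) : MvPolynomial (Σ j : Fin k, Fin (n j / 2 + 1)) 𝕜 :=
  if h : i ≤ n j / 2 then MvPolynomial.X ⟨j, ⟨i, Nat.lt_succ_of_le h⟩⟩ else 0

/-- The projection `Π* : R → R'`, sending `x_{i,j}` to `x_{i - ⌈n_j/2⌉, j}` if
`i ≥ ⌈n_j/2⌉` and to `0` otherwise. -/
noncomputable def projStar : MvPolynomial (Σ j : Fin k, Fin (n j + 1)) 𝕜 →ₐ[𝕜]
    MvPolynomial (Σ j : Fin k, Fin (n j / 2 + 1)) 𝕜 :=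
  aeval fun v => if (n v.1 + 1) / 2 ≤ (v.2 : ℕ) then Xv' 𝕜 k n v.1 ((v.2 : ℕ) - (n v.1 + 1) / 2)
    else 0

namespace MvPolynomial

variable {R σ M : Type*} [CommRing R]

def IsWeightedHomogeneousDerivation [AddCommMonoid M] (w : σ → M)
    (d : Derivation R (MvPolynomial σ R) (MvPolynomial σ R)) (c : M) : Prop :=
  ∀ i, (d (X i)).IsWeightedHomogeneous w (w i + c)

noncomputable def weightedEuler (R : Type*) [CommRing R] (w : σ → ℤ) :
    Derivation R (MvPolynomial σ R) (MvPolynomial σ R) :=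
  mkDerivation R fun i => w i • X i

theorem IsWeightedHomogeneous.eq_zero_of_neg {w : σ → ℤ} (hw : ∀ i, 0 ≤ w i) {m : ℤ}
    {p : MvPolynomial σ R} (hp : p.IsWeightedHomogeneous w m) (hm : m < 0) : p = 0 := by
  by_contra h
  obtain ⟨s, hs⟩ := exists_coeff_ne_zero h
  have : 0 ≤ Finsupp.weight w s := by
    rw [Finsupp.weight_apply]
    exact Finsupp.sum_nonneg fun i _ => smul_nonneg (Nat.zero_le _) (hw i)
  exact (hp hs ▸ this).not_gt hm

variable [Fintype σ]

theorem derivation_apply_eq_sum_mul_pderiv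
    (d : Derivation R (MvPolynomial σ R) (MvPolynomial σ R)) (p : MvPolynomial σ R) :
    d p = ∑ i, d (X i) * pderiv i p := by
  classical
  let D : Derivation R (MvPolynomial σ R) (MvPolynomial σ R) := ∑ i, d (X i) • pderiv i
  have hD (q) : D q = ∑ i, d (X i) * pderiv i q := by
    simp only [D, ← Derivation.coeFnAddMonoidHom_apply, map_sum, Finset.sum_apply]
    rfl
  rw [← hD, show d = D from derivation_ext fun j => by simp [hD, Pi.single_apply]]

theorem IsWeightedHomogeneous.weightedEuler_apply {w : σ → ℤ} {m : ℤ} {p : MvPolynomial σ R}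
    (hp : p.IsWeightedHomogeneous w m) : weightedEuler R w p = m • p := by
  refine IsWeightedHomogeneous.induction_on (motive := fun p _ => weightedEuler R w p = m • p)
    ?_ (fun p q _ _ hp hq => ?_) (fun s r hs => ?_) hp
  · rw [map_zero, smul_zero]
  · rw [map_add, hp, hq, smul_add]
  · rw [derivation_apply_eq_sum_mul_pderiv, ← hs, Finsupp.weight_eq_sum, Finset.sum_smul]
    refine Finset.sum_congr rfl fun i _ => ?_
    rw [weightedEuler, mkDerivation_X, smul_mul_assoc, X_mul_pderiv_monomial, smul_comm,
      ← natCast_zsmul, smul_smul, nsmul_eq_mul]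

namespace IsWeightedHomogeneousDerivation

variable {d : Derivation R (MvPolynomial σ R) (MvPolynomial σ R)}

theorem isWeightedHomogeneous_apply [AddCommGroup M] {w : σ → M} {c m : M}
    (hd : IsWeightedHomogeneousDerivation w d c) {p : MvPolynomial σ R}
    (hp : p.IsWeightedHomogeneous w m) : (d p).IsWeightedHomogeneous w (m + c) := by
  rw [derivation_apply_eq_sum_mul_pderiv]
  refine IsWeightedHomogeneous.sum _ _ _ fun i _ => ?_
  convert (hd i).mul (hp.pderiv (sub_add_cancel m (w i))) using 1
  abel

theorem isWeightedHomogeneous_iterate_apply [AddCommGroup M] {w : σ → M} {c m : M}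
    (hd : IsWeightedHomogeneousDerivation w d c) {p : MvPolynomial σ R}
    (hp : p.IsWeightedHomogeneous w m) (N : ℕ) :
    ((⇑d)^[N] p).IsWeightedHomogeneous w (m + N • c) := by
  induction N with
  | zero => simpa using hp
  | succ N ih =>
    rw [Function.iterate_succ_apply', succ_nsmul, ← add_assoc]
    exact hd.isWeightedHomogeneous_apply ih

theorem map_weightedHomogeneousComponent [AddCommGroup M] {w : σ → M} {c : M}
    (hd : IsWeightedHomogeneousDerivation w d c) (m : M) (p : MvPolynomial σ R) :
    d (weightedHomogeneousComponent w m p) = weightedHomogeneousComponent w (m + c) (d p) := by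
  induction p using MvPolynomial.induction_on' with
  | monomial s a =>
    have hs := isWeightedHomogeneous_monomial w s a rfl
    by_cases h : m = Finsupp.weight w s
    · rw [h, hs.weightedHomogeneousComponent_same,
        (hd.isWeightedHomogeneous_apply hs).weightedHomogeneousComponent_same]
    · rw [hs.weightedHomogeneousComponent_ne m h, map_zero,
        (hd.isWeightedHomogeneous_apply hs).weightedHomogeneousComponent_ne _ (by simpa using h)]
  | add p q hp hq => simp only [map_add, hp, hq]

theorem weightedEuler_lie {w : σ → ℤ} {c : ℤ} (hd : IsWeightedHomogeneousDerivation w d c) :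
    ⁅weightedEuler R w, d⁆ = c • d :=
  derivation_ext fun i => by
    rw [Derivation.commutator_apply, (hd i).weightedEuler_apply, weightedEuler, mkDerivation_X,
      Derivation.smul_apply, map_zsmul, add_smul, add_sub_cancel_left]

theorem exists_iterate_eq_zero {w : σ → ℤ} (hd : IsWeightedHomogeneousDerivation w d (-1))
    (hw : ∀ i, 0 ≤ w i) (p : MvPolynomial σ R) : ∃ N, (⇑d)^[N] p = 0 := by
  induction p using MvPolynomial.induction_on' with
  | monomial s a =>
    refine ⟨(Finsupp.weight w s).toNat + 1, ?_⟩
    refine (hd.isWeightedHomogeneous_iterate_apply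
      (isWeightedHomogeneous_monomial w s a rfl) _).eq_zero_of_neg hw ?_
    simp only [nsmul_eq_mul, mul_neg, mul_one, Nat.cast_add, Nat.cast_one]
    omega
  | add p q hp hq =>
    obtain ⟨M, hM⟩ := hp
    obtain ⟨N, hN⟩ := hq
    have hMp : (⇑d)^[N + M] p = 0 := by rw [Function.iterate_add_apply, hM, iterate_map_zero]
    have hNq : (⇑d)^[N + M] q = 0 := by
      rw [add_comm, Function.iterate_add_apply, hN, iterate_map_zero]
    exact ⟨N + M, by rw [iterate_map_add, hMp, hNq, add_zero]⟩

end IsWeightedHomogeneousDerivation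

end MvPolynomial

namespace IsSl2Triple.HasPrimitiveVectorWith

open LieModule

variable {R L M : Type*} [CommRing R] [IsDomain R] [CharZero R] [LieRing L] [LieAlgebra R L]
  [AddCommGroup M] [Module R M] [Module.IsTorsionFree R M] [LieRingModule L M] [LieModule R L M]
  {h e f : L} {t : IsSl2Triple h e f} {m : M} {μ : R}

theorem exists_nat_of_exists_pow_toEnd_f_eq_zero (P : t.HasPrimitiveVectorWith m μ)
    (hf : ∃ n, (toEnd R L M f ^ n) m = 0) : ∃ n : ℕ, μ = n := by
  obtain ⟨n, hn₁, hn₂⟩ := Nat.exists_not_and_succ_of_not_zero_of_exists P.ne_zero hf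
  refine ⟨n, ?_⟩
  have := P.lie_e_pow_succ_toEnd_f n
  rw [hn₂, lie_zero, eq_comm, smul_eq_zero_iff_left hn₁, mul_eq_zero, sub_eq_zero] at this
  exact this.resolve_left <| Nat.cast_add_one_ne_zero n

end IsSl2Triple.HasPrimitiveVectorWith

def varWeight (v : Σ j : Fin k, Fin (n j + 1)) : ℤ := n v.1 - 2 * (v.2 : ℕ)

def varCoindex (v : Σ j : Fin k, Fin (n j + 1)) : ℤ := n v.1 - (v.2 : ℕ)

-- `(i+1)(n_j-i) - i(n_j-i+1) = n_j - 2i`, which makes `⁅D, F⁆` the weighted Euler derivation.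
noncomputable def Fw : Derivation 𝕜 (MvPolynomial (Σ j : Fin k, Fin (n j + 1)) 𝕜)
    (MvPolynomial (Σ j : Fin k, Fin (n j + 1)) 𝕜) :=
  mkDerivation 𝕜 fun v => (((v.2 : ℕ) + 1) * (n v.1 - v.2)) • Xv 𝕜 k n v.1 ((v.2 : ℕ) + 1)

noncomputable def bottomVarsSubalgebra (l : ℕ) :
    Subalgebra 𝕜 (MvPolynomial (Σ j : Fin k, Fin (n j / 2 + 1)) 𝕜) :=
  Algebra.adjoin 𝕜 {p | ∃ j : Fin k, (j : ℕ) < l ∧ p = X ⟨j, 0⟩}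

variable {𝕜 k n}
omit [CharZero 𝕜]

theorem X_eq_Xv (v : Σ j : Fin k, Fin (n j + 1)) :
    (X v : MvPolynomial (Σ j : Fin k, Fin (n j + 1)) 𝕜) = Xv 𝕜 k n v.1 v.2 := by
  rw [Xv, dif_pos (Nat.lt_succ_iff.mp v.2.2)]

theorem Dw_Xv_succ {j : Fin k} {i : ℕ} (h : i < n j) :
    Dw 𝕜 k n (Xv 𝕜 k n j (i + 1)) = Xv 𝕜 k n j i := by
  rw [Xv, dif_pos (show i + 1 ≤ n j from h), Dw, mkDerivation_X, if_neg i.succ_ne_zero]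
  rfl

theorem Dw_Xv_zero (j : Fin k) : Dw 𝕜 k n (Xv 𝕜 k n j 0) = 0 := by
  rw [Xv, dif_pos (Nat.zero_le _), Dw, mkDerivation_X, if_pos rfl]

theorem Fw_Xv (j : Fin k) (i : ℕ) :
    Fw 𝕜 k n (Xv 𝕜 k n j i) = ((i + 1) * (n j - i)) • Xv 𝕜 k n j (i + 1) := by
  by_cases h : i ≤ n j
  · rw [Xv, dif_pos h, Fw, mkDerivation_X]
  · rw [Xv, dif_neg h, map_zero, Nat.sub_eq_zero_of_le (by omega), mul_zero, zero_smul]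

theorem Dw_Fw_Xv {j : Fin k} {i : ℕ} (h : i ≤ n j) :
    Dw 𝕜 k n (Fw 𝕜 k n (Xv 𝕜 k n j i)) = ((i + 1) * (n j - i)) • Xv 𝕜 k n j i := by
  rw [Fw_Xv, map_nsmul]
  rcases h.lt_or_eq with h | rfl
  · rw [Dw_Xv_succ h]
  · rw [Nat.sub_self, mul_zero, zero_smul, zero_smul]

theorem isWeightedHomogeneous_Xv {M : Type*} [AddCommMonoid M]
    {w : (Σ j : Fin k, Fin (n j + 1)) → M} {j : Fin k} {i : ℕ} {c : M}
    (hw : ∀ h : i < n j + 1, w ⟨j, ⟨i, h⟩⟩ = c) :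
    (Xv 𝕜 k n j i).IsWeightedHomogeneous w c := by
  unfold Xv
  split_ifs with h
  · exact hw (Nat.lt_succ_of_le h) ▸ isWeightedHomogeneous_X 𝕜 w _
  · exact isWeightedHomogeneous_zero 𝕜 w c

theorem isWeightedHomogeneousDerivation_Dw :
    IsWeightedHomogeneousDerivation (varWeight k n) (Dw 𝕜 k n) 2 := by
  rintro ⟨j, ⟨_ | i, hi⟩⟩
  · rw [X_eq_Xv, Dw_Xv_zero]
    exact isWeightedHomogeneous_zero 𝕜 _ _
  · rw [X_eq_Xv, Dw_Xv_succ (j := j) (by omega)]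
    refine isWeightedHomogeneous_Xv fun _ => ?_
    simp only [varWeight]
    push_cast
    ring

theorem isWeightedHomogeneousDerivation_Fw_varWeight :
    IsWeightedHomogeneousDerivation (varWeight k n) (Fw 𝕜 k n) (-2) := by
  rintro ⟨j, ⟨i, hi⟩⟩
  rw [X_eq_Xv, Fw_Xv, ← mem_weightedHomogeneousSubmodule]
  refine Submodule.smul_of_tower_mem _ _ (isWeightedHomogeneous_Xv fun _ => ?_)
  simp only [varWeight]
  push_cast
  ring

theorem isWeightedHomogeneousDerivation_Fw_varCoindex :
    IsWeightedHomogeneousDerivation (varCoindex k n) (Fw 𝕜 k n) (-1) := by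
  rintro ⟨j, ⟨i, hi⟩⟩
  rw [X_eq_Xv, Fw_Xv, ← mem_weightedHomogeneousSubmodule]
  refine Submodule.smul_of_tower_mem _ _ (isWeightedHomogeneous_Xv fun _ => ?_)
  simp only [varCoindex]
  push_cast
  ring

theorem lie_Dw_Fw : ⁅Dw 𝕜 k n, Fw 𝕜 k n⁆ = weightedEuler 𝕜 (varWeight k n) := by
  refine derivation_ext fun ⟨j, ⟨i, hi⟩⟩ => ?_
  rw [Derivation.commutator_apply, weightedEuler, mkDerivation_X, X_eq_Xv, Dw_Fw_Xv (by omega)]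
  simp only [varWeight]
  rcases i with _ | i
  · rw [Dw_Xv_zero, map_zero, sub_zero, ← natCast_zsmul]
    simp
  · rw [Dw_Xv_succ (j := j) (by omega), Fw_Xv, ← natCast_zsmul, ← natCast_zsmul, ← sub_smul]
    congr 1
    push_cast [Nat.cast_sub (show i + 1 ≤ n j by omega), Nat.cast_sub (show i ≤ n j by omega)]
    ring

theorem isSl2Triple_Dw_Fw (h : weightedEuler 𝕜 (varWeight k n) ≠ 0) :
    IsSl2Triple (weightedEuler 𝕜 (varWeight k n)) (Dw 𝕜 k n) (Fw 𝕜 k n) where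
  h_ne_zero := h
  lie_e_f := lie_Dw_Fw
  lie_h_e_nsmul := by
    rw [isWeightedHomogeneousDerivation_Dw.weightedEuler_lie]
    exact natCast_zsmul _ 2
  lie_h_f_nsmul := by
    rw [isWeightedHomogeneousDerivation_Fw_varWeight.weightedEuler_lie, neg_smul]
    exact congrArg Neg.neg (natCast_zsmul _ 2)

theorem exists_pow_Fw_eq_zero (p : MvPolynomial (Σ j : Fin k, Fin (n j + 1)) 𝕜) :
    ∃ N, (LieModule.toEnd 𝕜 _ _ (Fw 𝕜 k n) ^ N) p = 0 := by
  obtain ⟨N, hN⟩ := isWeightedHomogeneousDerivation_Fw_varCoindex.exists_iterate_eq_zero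
    (fun v => by simp only [varCoindex]; omega) p
  exact ⟨N, by rw [Module.End.pow_apply]; exact hN⟩

theorem nonneg_of_isWeightedHomogeneous_of_Dw_eq_zero [CharZero 𝕜]
    {g : MvPolynomial (Σ j : Fin k, Fin (n j + 1)) 𝕜} {m : ℤ}
    (hg : g.IsWeightedHomogeneous (varWeight k n) m) (hg0 : g ≠ 0) (hD : Dw 𝕜 k n g = 0) :
    0 ≤ m := by
  have hH : weightedEuler 𝕜 (varWeight k n) g = (m : 𝕜) • g := by
    rw [hg.weightedEuler_apply, Int.cast_smul_eq_zsmul]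
  by_cases hH0 : weightedEuler 𝕜 (varWeight k n) = 0
  · rw [hH0, Derivation.zero_apply, eq_comm, smul_eq_zero, Int.cast_eq_zero] at hH
    exact (hH.resolve_right hg0).ge
  · have P : (isSl2Triple_Dw_Fw hH0).HasPrimitiveVectorWith g (m : 𝕜) := ⟨hg0, hH, hD⟩
    obtain ⟨N, hN⟩ := P.exists_nat_of_exists_pow_toEnd_f_eq_zero (exists_pow_Fw_eq_zero g)
    have hmN : m = N := by exact_mod_cast hN
    omega

theorem projStar_X_eq_zero {v : Σ j : Fin k, Fin (n j + 1)} (hv : 0 < varWeight k n v) :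
    projStar 𝕜 k n (X v) = 0 := by
  simp only [varWeight] at hv
  rw [projStar, aeval_X, if_neg (by omega)]

theorem projStar_X_mem {l : ℕ} (hodd : ∀ j : Fin k, l ≤ (j : ℕ) → Odd (n j))
    {v : Σ j : Fin k, Fin (n j + 1)} (hv : varWeight k n v = 0) :
    projStar 𝕜 k n (X v) ∈ bottomVarsSubalgebra 𝕜 k n l := by
  obtain ⟨j, ⟨i, hi⟩⟩ := v
  simp only [varWeight] at hv
  have hj : (j : ℕ) < l := by
    by_contra h
    have := Nat.odd_iff.mp (hodd j (by omega))
    omega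
  rw [projStar, aeval_X]
  dsimp only
  rw [if_pos (by omega), show i - (n j + 1) / 2 = 0 by omega, Xv', dif_pos (Nat.zero_le _)]
  exact Algebra.subset_adjoin ⟨j, hj, rfl⟩

theorem projStar_monomial_mem {l : ℕ} (hodd : ∀ j : Fin k, l ≤ (j : ℕ) → Odd (n j))
    (s : (Σ j : Fin k, Fin (n j + 1)) →₀ ℕ) (a : 𝕜)
    (hs : 0 ≤ Finsupp.weight (varWeight k n) s) :
    projStar 𝕜 k n (monomial s a) ∈ bottomVarsSubalgebra 𝕜 k n l := by
  rw [monomial_eq, map_mul, map_finsuppProd, Finsupp.prod]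
  by_cases hpos : ∃ v ∈ s.support, 0 < varWeight k n v
  · obtain ⟨v, hv, hwv⟩ := hpos
    rw [Finset.prod_eq_zero hv (by rw [map_pow, projStar_X_eq_zero hwv,
      zero_pow (Finsupp.mem_support_iff.mp hv)]), mul_zero]
    exact zero_mem _
  push Not at hpos
  have hterm_nonpos (v) (hv : v ∈ s.support) : s v • varWeight k n v ≤ 0 :=
    smul_nonpos_of_nonneg_of_nonpos (Nat.zero_le _) (hpos v hv)
  have hterm_zero := (Finset.sum_eq_zero_iff_of_nonpos hterm_nonpos).mp
    (le_antisymm (Finset.sum_nonpos hterm_nonpos) hs)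
  refine mul_mem ?_ (prod_mem fun v hv => ?_)
  · rw [← algebraMap_eq, AlgHom.commutes]
    exact Subalgebra.algebraMap_mem _ a
  · rw [map_pow]
    exact pow_mem (projStar_X_mem hodd ((smul_eq_zero.mp (hterm_zero v hv)).resolve_left
      (Finsupp.mem_support_iff.mp hv))) _

theorem projStar_mem_of_isWeightedHomogeneous {l : ℕ}
    (hodd : ∀ j : Fin k, l ≤ (j : ℕ) → Odd (n j)) {g : MvPolynomial (Σ j : Fin k, Fin (n j + 1)) 𝕜}
    {m : ℤ} (hg : g.IsWeightedHomogeneous (varWeight k n) m) (hm : 0 ≤ m) :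
    projStar 𝕜 k n g ∈ bottomVarsSubalgebra 𝕜 k n l := by
  refine IsWeightedHomogeneous.induction_on
    (motive := fun g _ => projStar 𝕜 k n g ∈ bottomVarsSubalgebra 𝕜 k n l)
    ?_ (fun p q _ _ hp hq => ?_) (fun s a hs => ?_) hg
  · rw [map_zero]
    exact zero_mem _
  · rw [map_add]
    exact add_mem hp hq
  · exact projStar_monomial_mem hodd s a (hs ▸ hm)

theorem projStar_image_general (𝕜 : Type) [Field 𝕜] [CharZero 𝕜] (k : ℕ)
    (n : Fin k → ℕ) (l : ℕ)
    (hodd : ∀ j : Fin k, l ≤ (j : ℕ) → Odd (n j))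
    (f : MvPolynomial (Σ j : Fin k, Fin (n j + 1)) 𝕜) (hf : Dw 𝕜 k n f = 0) :
    projStar 𝕜 k n f ∈ Algebra.adjoin 𝕜
      {p : MvPolynomial (Σ j : Fin k, Fin (n j / 2 + 1)) 𝕜 |
        ∃ j : Fin k, (j : ℕ) < l ∧ p = MvPolynomial.X ⟨j, 0⟩} := by
  classical
  rw [← sum_weightedHomogeneousComponent (varWeight k n) f,
    finsum_eq_sum _ (weightedHomogeneousComponent_finsupp f), map_sum]
  refine Subalgebra.sum_mem _ fun m _ => ?_
  set g := weightedHomogeneousComponent (varWeight k n) m f with hg_def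
  have hg : g.IsWeightedHomogeneous (varWeight k n) m :=
    weightedHomogeneousComponent_isWeightedHomogeneous m f
  rcases eq_or_ne g 0 with hg0 | hg0
  · rw [hg0, map_zero]
    exact zero_mem _
  have hD : Dw 𝕜 k n g = 0 := by
    rw [hg_def, isWeightedHomogeneousDerivation_Dw.map_weightedHomogeneousComponent, hf, map_zero]
  exact projStar_mem_of_isWeightedHomogeneous hodd hg
    (nonneg_of_isWeightedHomogeneous_of_Dw_eq_zero hg hg0 hD)

theorem projStar_image (𝕜 : Type) [Field 𝕜] [CharZero 𝕜] (k : ℕ) (hk : 1 ≤ k)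
    (n : Fin k → ℕ) (l' l : ℕ) (hl'l : l' ≤ l) (hlk : l ≤ k)
    (h2 : ∀ j : Fin k, (j : ℕ) < l' → n j % 4 = 2)
    (h0 : ∀ j : Fin k, l' ≤ (j : ℕ) → (j : ℕ) < l → n j % 4 = 0)
    (hodd : ∀ j : Fin k, l ≤ (j : ℕ) → Odd (n j))
    (f : MvPolynomial (Σ j : Fin k, Fin (n j + 1)) 𝕜) (hf : Dw 𝕜 k n f = 0) :
    projStar 𝕜 k n f ∈ Algebra.adjoin 𝕜
      {p : MvPolynomial (Σ j : Fin k, Fin (n j / 2 + 1)) 𝕜 |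
        ∃ j : Fin k, (j : ℕ) < l ∧ p = MvPolynomial.X ⟨j, 0⟩} :=
  projStar_image_general 𝕜 k n l hodd f hf
end

section
/- For every 1 ≤ j ≤ k and every 0 ≤ i ≤ ⌊n_j/2⌋, the polynomial f_{i,j} is an invariant: D(f_{i,j}) = 0. -/
open MvPolynomial Finset

variable (𝕜 : Type) [Field 𝕜] [CharZero 𝕜] (k : ℕ) (n : Fin k → ℕ)

/-- The invariants `f_{i,j}`. -/
noncomputable def fP (j : Fin k) (i : ℕ) : MvPolynomial (Σ j : Fin k, Fin (n j + 1)) 𝕜 :=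
  if i = 0 then Xv 𝕜 k n j 0
  else (∑ q ∈ Finset.range i, C ((-1 : 𝕜) ^ q) * Xv 𝕜 k n j q * Xv 𝕜 k n j (2 * i - q))
    + C ((-1 : 𝕜) ^ i / 2) * Xv 𝕜 k n j i ^ 2

lemma Dw_Xv (j : Fin k) (i : ℕ) (h : i ≤ n j) :
    Dw 𝕜 k n (Xv 𝕜 k n j i) = if i = 0 then 0 else Xv 𝕜 k n j (i - 1) := by
  rw [Xv, dif_pos h, Dw, mkDerivation_X]

theorem D_f_eq_zero (𝕜 : Type) [Field 𝕜] [CharZero 𝕜] (k : ℕ) (hk : 1 ≤ k) (n : Fin k → ℕ)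
    (j : Fin k) (i : ℕ) (hi : 2 * i ≤ n j) :  -- i.e. `0 ≤ i ≤ ⌊n_j/2⌋`
    Dw 𝕜 k n (fP 𝕜 k n j i) = 0 := by
  rcases Nat.eq_zero_or_pos i with rfl | hi0
  · rw [fP, if_pos rfl, Dw_Xv 𝕜 k n j 0 (by omega), if_pos rfl]
  · set t : ℕ → MvPolynomial (Σ j : Fin k, Fin (n j + 1)) 𝕜 := fun q =>
      if q = 0 then 0
      else C ((-1 : 𝕜) ^ q) * (Xv 𝕜 k n j (q - 1) * Xv 𝕜 k n j (2 * i - q)) with ht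
    have key : ∀ q ∈ Finset.range i,
        Dw 𝕜 k n (C ((-1 : 𝕜) ^ q) * Xv 𝕜 k n j q * Xv 𝕜 k n j (2 * i - q))
          = t q - t (q + 1) := by
      intro q hq
      rw [Finset.mem_range] at hq
      have h1 : q ≤ n j := by omega
      have h2 : 2 * i - q ≤ n j := by omega
      have e1 : 2 * i - (q + 1) = 2 * i - q - 1 := by omega
      rw [mul_assoc, ← smul_eq_C_mul, Derivation.map_smul, Derivation.leibniz,
        Dw_Xv 𝕜 k n j q h1, Dw_Xv 𝕜 k n j (2 * i - q) h2,
        if_neg (by omega : ¬ 2 * i - q = 0)]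
      rcases Nat.eq_zero_or_pos q with rfl | hq0
      · simp only [↓reduceIte, smul_zero, add_zero, ht, if_neg (Nat.one_ne_zero), e1,
          smul_eq_C_mul, smul_eq_mul, pow_succ, pow_zero, map_mul, map_neg, map_one,
          mul_zero]
        ring
      · rw [if_neg hq0.ne', ht]
        simp only [if_neg hq0.ne', if_neg (Nat.succ_ne_zero q), e1]
        simp only [smul_eq_C_mul, smul_eq_mul, pow_succ, map_mul, map_neg, map_one,
          Nat.add_sub_cancel]
        ring
    have hsq : Dw 𝕜 k n (C ((-1 : 𝕜) ^ i / 2) * Xv 𝕜 k n j i ^ 2)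
        = C ((-1 : 𝕜) ^ i) * (Xv 𝕜 k n j (i - 1) * Xv 𝕜 k n j i) := by
      rw [sq, ← smul_eq_C_mul, Derivation.map_smul, Derivation.leibniz,
        Dw_Xv 𝕜 k n j i (by omega), if_neg hi0.ne']
      simp only [smul_eq_C_mul]
      have h2 : (C ((-1 : 𝕜) ^ i / 2) : MvPolynomial (Σ j : Fin k, Fin (n j + 1)) 𝕜) * 2
          = C ((-1 : 𝕜) ^ i) := by
        rw [← map_ofNat (C : 𝕜 →+* MvPolynomial (Σ j : Fin k, Fin (n j + 1)) 𝕜) 2, ← map_mul,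
          div_mul_cancel₀]
        norm_num
      calc C ((-1 : 𝕜) ^ i / 2) * (Xv 𝕜 k n j i * Xv 𝕜 k n j (i - 1)
            + Xv 𝕜 k n j i * Xv 𝕜 k n j (i - 1))
          = (C ((-1 : 𝕜) ^ i / 2) * 2) * (Xv 𝕜 k n j (i - 1) * Xv 𝕜 k n j i) := by ring
        _ = _ := by rw [h2]
    rw [fP, if_neg hi0.ne', map_add, map_sum, Finset.sum_congr rfl key,
      Finset.sum_range_sub', hsq, ht]
    have e2 : 2 * i - i = i := by omega
    simp only [↓reduceIte, if_neg hi0.ne', e2]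
    ring
end

section
/- Assume k ≥ 2 and let T′ ⊆ ker D be the union of the four families: (1) f_{i,j} for 1 ≤ j ≤ k and 0 ≤ i ≤ ⌊n_j/2⌋; (2) ε_{s_{i₂,j₂}}(x_{i₁,j₁}) for 1 ≤ j₁ < j₂ ≤ k, ⌊(n_{j₁}−1)/2⌋ < i₁ ≤ n_{j₁}, 0 ≤ i₂ ≤ ⌊(n_{j₂}−1)/2⌋; (3) ε_{s_{i₂,j}}(x_{i₁,j}) for 1 ≤ j ≤ k, 0 ≤ i₂ ≤ ⌊(n_j−1)/2⌋, i₂ ≤ i₁ ≤ n_j; (4) ε_{s_{i₂,j₂}}(x_{i₁,j₁}) for 1 ≤ j₂ < j₁ ≤ k, 0 ≤ i₁ ≤ n_{j₁}, 0 ≤ i₂ ≤ ⌊(n_{j₂}−1)/2⌋. Let Z ⊆ V be the set of points v = (a_{i,j}) with a_{i,j} = 0 for all 1 ≤ j ≤ k and all 0 ≤ i ≤ ⌊(n_j−1)/2⌋. Then T′ separates every pair of points not simultaneously lying in Z: if v, w ∈ V are such that not both v ∈ Z and w ∈ Z, and f(v) ≠ f(w) for some f ∈ ker D, then there exists t ∈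 T′ with t(v) ≠ t(w). -/
open MvPolynomial Finset

variable (𝕜 : Type) [Field 𝕜] [CharZero 𝕜] (k : ℕ) (n : Fin k → ℕ)

/-- The local slices `s_{i,j}`. -/
noncomputable def sP (j : Fin k) (i : ℕ) : MvPolynomial (Σ j : Fin k, Fin (n j + 1)) 𝕜 :=
  if i = 0 then Xv 𝕜 k n j 1
  else ∑ q ∈ Finset.range (i + 1),
    C ((-1 : 𝕜) ^ q * ((2 * i + 1 - 2 * q : ℕ) : 𝕜) / 2) * Xv 𝕜 k n j q * Xv 𝕜 k n j (2 * i + 1 - q)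

/-- `ε_s(f) = ∑_{q=0}^{ν} ((-1)^q/q!) (D^q f) s^q (D s)^{ν - q}`. -/
noncomputable def eps (s f : MvPolynomial (Σ j : Fin k, Fin (n j + 1)) 𝕜) (ν : ℕ) :
    MvPolynomial (Σ j : Fin k, Fin (n j + 1)) 𝕜 :=
  ∑ q ∈ Finset.range (ν + 1),
    C ((-1 : 𝕜) ^ q / (q.factorial : 𝕜)) * ((⇑(Dw 𝕜 k n))^[q] f) * s ^ q *
      (Dw 𝕜 k n s) ^ (ν - q)

/-! The flow `exp(tD)` on `V` preserves every invariant. If `v ∉ Z`, let `(j₀, i₀)` be the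
lexicographically first position with `2 i₀ + 1 ≤ n_{j₀}` and `a_{i₀,j₀} ≠ 0`, and let
`s = s_{i₀,j₀}`. Then `D s = f_{i₀,j₀}`, so `c = (D s)(v) ≠ 0`, and
`ε_s(x_{i,j})(v) = c^i · (exp(t D) v)_{i,j}` with `t = -s(v)/c`. If every element of `T'` takes
the same values at `v` and `w`, then `c` is the same for both points, the families (2)–(4) give
equal coordinates of `exp(t_v D) v` and `exp(t_w D) w` at every position not lexicographically
below the pivot in the lower half of its column, and the `f_{i,j}` force the remaining
coordinates to vanish at both points. So `v` and `w` lie on one orbit, where every invariant is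
constant. -/

namespace Weitzenbock

variable {𝕜 k n}

local notation "ι" => Σ j : Fin k, Fin (n j + 1)

/-- `a_{i,j}`, read as `0` for `i > n_j`. -/
noncomputable def coord (v : ι → 𝕜) (j : Fin k) (i : ℕ) : 𝕜 :=
  eval v (Xv 𝕜 k n j i)

omit [CharZero 𝕜] in
theorem coord_coe (v : ι → 𝕜) (j : Fin k) (i : Fin (n j + 1)) : coord v j i = v ⟨j, i⟩ := by
  simp [coord, Xv, Nat.le_of_lt_succ i.isLt]

omit [CharZero 𝕜] in
theorem Dw_Xv_zero (j : Fin k) : Dw 𝕜 k n (Xv 𝕜 k n j 0) = 0 := by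
  simp [Xv, Dw, mkDerivation_X]

omit [CharZero 𝕜] in
theorem Dw_Xv_succ {j : Fin k} {i : ℕ} (h : i + 1 ≤ n j) :
    Dw 𝕜 k n (Xv 𝕜 k n j (i + 1)) = Xv 𝕜 k n j i := by
  simp [Xv, Dw, mkDerivation_X, h, Nat.le_of_succ_le h]

omit [CharZero 𝕜] in
theorem iterate_Dw_Xv {j : Fin k} {i q : ℕ} (h : i ≤ n j) (hq : q ≤ i) :
    (⇑(Dw 𝕜 k n))^[q] (Xv 𝕜 k n j i) = Xv 𝕜 k n j (i - q) := by
  induction q with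
  | zero => rfl
  | succ q ih =>
    rw [Function.iterate_succ_apply', ih (by omega), show i - q = i - (q + 1) + 1 by omega,
      Dw_Xv_succ (by omega)]

noncomputable def flow (t : 𝕜) (v : ι → 𝕜) : ι → 𝕜 :=
  fun p => ∑ q ∈ range (p.2 + 1), t ^ q / q.factorial * coord v p.1 (p.2 - q)

omit [CharZero 𝕜] in
theorem flow_zero (v : ι → 𝕜) : flow 0 v = v := by
  funext ⟨j, i⟩
  simp [flow, Finset.sum_range_succ', coord_coe]

omit [CharZero 𝕜] in
theorem flow_apply_eq_zero {v : ι → 𝕜} {j : Fin k} {i : Fin (n j + 1)} (t : 𝕜)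
    (h : ∀ q ≤ (i : ℕ), coord v j q = 0) : flow t v ⟨j, i⟩ = 0 :=
  sum_eq_zero fun q _ => by rw [h _ (Nat.sub_le _ _), mul_zero]

noncomputable def orbitPoly (v : ι → 𝕜) : MvPolynomial ι 𝕜 →ₐ[𝕜] Polynomial 𝕜 :=
  aeval fun p => ∑ q ∈ range (p.2 + 1),
    Polynomial.C (coord v p.1 (p.2 - q) / q.factorial) * Polynomial.X ^ q

omit [CharZero 𝕜] in
theorem eval_orbitPoly (v : ι → 𝕜) (t : 𝕜) (f : MvPolynomial ι 𝕜) :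
    (orbitPoly v f).eval t = eval (flow t v) f := by
  induction f using MvPolynomial.induction_on with
  | C a => simp [orbitPoly]
  | add f g hf hg => simp [hf, hg]
  | mul_X f p hf =>
    rw [map_mul, Polynomial.eval_mul, hf, map_mul, orbitPoly, aeval_X, eval_X,
      Polynomial.eval_finsetSum, flow]
    congr 1
    refine sum_congr rfl fun q _ => ?_
    simp only [Polynomial.eval_mul, Polynomial.eval_C, Polynomial.eval_pow, Polynomial.eval_X]
    ring

theorem derivative_C_div_factorial_mul_X_pow_succ (a : 𝕜) (q : ℕ) :
    Polynomial.derivative (Polynomial.C (a / (q + 1).factorial) * Polynomial.X ^ (q + 1)) =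
      Polynomial.C (a / q.factorial) * Polynomial.X ^ q := by
  rw [Polynomial.derivative_C_mul_X_pow, Nat.add_sub_cancel, Nat.factorial_succ]
  congr 1
  have : (q + 1 : 𝕜) ≠ 0 := by exact_mod_cast q.succ_ne_zero
  push_cast
  field_simp

theorem derivative_orbitPoly_X (v : ι → 𝕜) (p : ι) :
    Polynomial.derivative (orbitPoly v (X p)) = orbitPoly v (Dw 𝕜 k n (X p)) := by
  obtain ⟨j, i, hi⟩ := p
  rcases i with _ | i
  · simp [orbitPoly, Dw, mkDerivation_X]
  · rw [orbitPoly, aeval_X, Dw, mkDerivation_X, if_neg (Nat.succ_ne_zero i), Nat.add_sub_cancel,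
      Xv, dif_pos (by omega : i ≤ n j), aeval_X, map_sum, sum_range_succ']
    simp only [derivative_C_div_factorial_mul_X_pow_succ, Nat.add_sub_add_right]
    simp

theorem derivative_orbitPoly (v : ι → 𝕜) (f : MvPolynomial ι 𝕜) :
    Polynomial.derivative (orbitPoly v f) = orbitPoly v (Dw 𝕜 k n f) := by
  induction f using MvPolynomial.induction_on with
  | C a => simp [orbitPoly, MvPolynomial.derivation_C]
  | add f g hf hg => simp [hf, hg]
  | mul_X f p hf =>
    rw [map_mul, Polynomial.derivative_mul, hf, derivative_orbitPoly_X, Derivation.leibniz,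
      smul_eq_mul, smul_eq_mul, map_add, map_mul, map_mul]
    ring

theorem eval_flow_of_Dw_eq_zero {f : MvPolynomial ι 𝕜} (hf : Dw 𝕜 k n f = 0) (t : 𝕜)
    (v : ι → 𝕜) : eval (flow t v) f = eval v f := by
  have hc := Polynomial.eq_C_of_derivative_eq_zero (p := orbitPoly v f)
    (by rw [derivative_orbitPoly, hf, map_zero])
  calc eval (flow t v) f = (orbitPoly v f).eval t := (eval_orbitPoly v t f).symm
    _ = (orbitPoly v f).eval 0 := by rw [hc]; simp only [Polynomial.eval_C]
    _ = eval v f := by rw [eval_orbitPoly, flow_zero]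

omit [CharZero 𝕜] in
theorem Dw_mul_Xv_succ (p : MvPolynomial ι 𝕜) {j : Fin k} {i : ℕ} (h : i + 1 ≤ n j) :
    Dw 𝕜 k n (p * Xv 𝕜 k n j (i + 1)) = Dw 𝕜 k n p * Xv 𝕜 k n j (i + 1) + p * Xv 𝕜 k n j i := by
  rw [Derivation.leibniz, smul_eq_mul, smul_eq_mul, Dw_Xv_succ h]
  ring

theorem Dw_sP {j : Fin k} {i : ℕ} (h : 2 * i + 1 ≤ n j) :
    Dw 𝕜 k n (sP 𝕜 k n j i) = fP 𝕜 k n j i := by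
  rcases Nat.eq_zero_or_pos i with rfl | hi
  · simpa [sP, fP] using Dw_Xv_succ (𝕜 := 𝕜) (i := 0) h
  set x : ℕ → MvPolynomial ι 𝕜 := Xv 𝕜 k n j
  set c : ℕ → 𝕜 := fun q => (-1) ^ q * ((2 * i + 1 - 2 * q : ℕ) : 𝕜) / 2
  have hs : sP 𝕜 k n j i = ∑ q ∈ range (i + 1), C (c q) * (x q * x (2 * i + 1 - q)) := by
    simp only [sP, if_neg hi.ne', mul_assoc, x, c]
  have hf : fP 𝕜 k n j i = ∑ q ∈ range i, C ((-1) ^ q) * (x q * x (2 * i - q)) +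
      C ((-1) ^ i / 2) * (x i * x (2 * i - i)) := by
    simp only [fP, if_neg hi.ne', mul_assoc, x, sq, show 2 * i - i = i by omega]
  have hc_last : c i = (-1) ^ i / 2 := by simp [c, show 2 * i + 1 - 2 * i = 1 by omega]
  have hc_succ_add (q : ℕ) (hq : q < i) : c (q + 1) + c q = (-1) ^ q := by
    simp only [c, Nat.cast_sub (by omega : 2 * (q + 1) ≤ 2 * i + 1),
      Nat.cast_sub (by omega : 2 * q ≤ 2 * i + 1)]
    push_cast
    ring
  have hx0 : Dw 𝕜 k n (x 0) = 0 := Dw_Xv_zero j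
  rw [hs, hf]
  -- `D s` splits into two sums over `x_q x_{2i-q}` whose coefficients telescope via `hc_succ_add`
  calc Dw 𝕜 k n (∑ q ∈ range (i + 1), C (c q) * (x q * x (2 * i + 1 - q)))
      = ∑ q ∈ range (i + 1), C (c q) * (Dw 𝕜 k n (x q) * x (2 * i + 1 - q)) +
          ∑ q ∈ range (i + 1), C (c q) * (x q * x (2 * i - q)) := by
        rw [map_sum, ← sum_add_distrib]
        refine sum_congr rfl fun q hq => ?_
        have hq : q ≤ i := Nat.lt_succ_iff.1 (mem_range.1 hq)
        rw [Derivation.leibniz, derivation_C, smul_zero, add_zero, smul_eq_mul,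
          show 2 * i + 1 - q = 2 * i - q + 1 by omega, Dw_mul_Xv_succ _ (by omega), mul_add]
    _ = ∑ q ∈ range i, C (c (q + 1)) * (x q * x (2 * i - q)) +
          (∑ q ∈ range i, C (c q) * (x q * x (2 * i - q)) + C (c i) * (x i * x (2 * i - i))) := by
        rw [sum_range_succ' _ i, sum_range_succ _ i, hx0, zero_mul, mul_zero, add_zero]
        congr 1
        refine sum_congr rfl fun q hq => ?_
        rw [Dw_Xv_succ (by have := mem_range.1 hq; omega), show 2 * i + 1 - (q + 1) = 2 * i - q by omega]
    _ = _ := by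
        rw [← add_assoc, ← sum_add_distrib, hc_last]
        congr 1
        refine sum_congr rfl fun q hq => ?_
        rw [← add_mul, ← map_add, hc_succ_add q (mem_range.1 hq)]

theorem eval_fP_eq_zero_iff {v : ι → 𝕜} {j : Fin k} {i : ℕ} (h : ∀ q < i, coord v j q = 0) :
    eval v (fP 𝕜 k n j i) = 0 ↔ coord v j i = 0 := by
  rcases Nat.eq_zero_or_pos i with rfl | hi
  · rfl
  have hsum : ∀ q ∈ range i,
      eval v (C ((-1 : 𝕜) ^ q) * Xv 𝕜 k n j q * Xv 𝕜 k n j (2 * i - q)) = 0 := fun q hq => by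
    rw [map_mul, map_mul, ← coord, h q (mem_range.1 hq), mul_zero, zero_mul]
  rw [fP, if_neg hi.ne', map_add, map_sum, sum_eq_zero hsum, zero_add, map_mul, map_pow, eval_C,
    ← coord, mul_eq_zero, pow_eq_zero_iff two_ne_zero, or_iff_right (by simp)]

theorem coord_eq_zero_of_eval_fP {v : ι → 𝕜} {j : Fin k} {i : ℕ}
    (h : ∀ m ≤ i, eval v (fP 𝕜 k n j m) = 0) : ∀ q ≤ i, coord v j q = 0 := by
  intro q
  induction q using Nat.strong_induction_on with
  | _ q ih => exact fun hq => (eval_fP_eq_zero_iff fun m hm => ih m hm (by omega)).1 (h q hq)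

theorem eval_eps_Xv {v : ι → 𝕜} {s : MvPolynomial ι 𝕜} (hs : eval v (Dw 𝕜 k n s) ≠ 0)
    {j : Fin k} (i : Fin (n j + 1)) :
    eval v (eps 𝕜 k n s (Xv 𝕜 k n j i) i) =
      eval v (Dw 𝕜 k n s) ^ (i : ℕ) * flow (-eval v s / eval v (Dw 𝕜 k n s)) v ⟨j, i⟩ := by
  rw [eps, map_sum, flow, mul_sum]
  refine sum_congr rfl fun q hq => ?_
  have hqi : q ≤ i := Nat.lt_succ_iff.1 (mem_range.1 hq)
  rw [map_mul, map_mul, map_mul, iterate_Dw_Xv (Nat.le_of_lt_succ i.isLt) hqi, ← coord, eval_C,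
    map_pow, map_pow, ← pow_sub_mul_pow _ hqi, div_pow, neg_pow (eval v s)]
  field_simp

variable (𝕜 k n) in
def invariantFamily : Set (MvPolynomial ι 𝕜) :=
  {p | ∃ (j : Fin k) (i : ℕ), 2 * i ≤ n j ∧ p = fP 𝕜 k n j i} ∪
  {p | ∃ (j1 j2 : Fin k) (i1 i2 : ℕ), j1 < j2 ∧ n j1 ≤ 2 * i1 ∧ i1 ≤ n j1 ∧
    2 * i2 + 1 ≤ n j2 ∧ p = eps 𝕜 k n (sP 𝕜 k n j2 i2) (Xv 𝕜 k n j1 i1) i1} ∪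
  {p | ∃ (j : Fin k) (i1 i2 : ℕ), 2 * i2 + 1 ≤ n j ∧ i2 ≤ i1 ∧ i1 ≤ n j ∧
    p = eps 𝕜 k n (sP 𝕜 k n j i2) (Xv 𝕜 k n j i1) i1} ∪
  {p | ∃ (j1 j2 : Fin k) (i1 i2 : ℕ), j2 < j1 ∧ i1 ≤ n j1 ∧ 2 * i2 + 1 ≤ n j2 ∧
    p = eps 𝕜 k n (sP 𝕜 k n j2 i2) (Xv 𝕜 k n j1 i1) i1}

omit [CharZero 𝕜] in
theorem fP_mem_invariantFamily {j : Fin k} {i : ℕ} (h : 2 * i ≤ n j) :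
    fP 𝕜 k n j i ∈ invariantFamily 𝕜 k n :=
  Or.inl (Or.inl (Or.inl ⟨j, i, h, rfl⟩))

omit [CharZero 𝕜] in
theorem eps_mem_invariantFamily {j₁ j₂ : Fin k} {i₁ i₂ : ℕ} (h₁ : i₁ ≤ n j₁)
    (h₂ : 2 * i₂ + 1 ≤ n j₂) (h : j₁ < j₂ ∧ n j₁ ≤ 2 * i₁ ∨ j₁ = j₂ ∧ i₂ ≤ i₁ ∨ j₂ < j₁) :
    eps 𝕜 k n (sP 𝕜 k n j₂ i₂) (Xv 𝕜 k n j₁ i₁) i₁ ∈ invariantFamily 𝕜 k n := by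
  rcases h with ⟨hlt, hle⟩ | ⟨rfl, hle⟩ | hlt
  · exact Or.inl (Or.inl (Or.inr ⟨j₁, j₂, i₁, i₂, hlt, hle, h₁, h₂, rfl⟩))
  · exact Or.inl (Or.inr ⟨j₁, i₁, i₂, h₂, hle, h₁, rfl⟩)
  · exact Or.inr ⟨j₁, j₂, i₁, i₂, hlt, h₁, h₂, rfl⟩

omit [CharZero 𝕜] in
theorem exists_lex_min_coord_ne_zero {v : ι → 𝕜}
    (hv : ∃ (j : Fin k) (i : Fin (n j + 1)), 2 * (i : ℕ) + 1 ≤ n j ∧ v ⟨j, i⟩ ≠ 0) :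
    ∃ j₀ i₀, 2 * i₀ + 1 ≤ n j₀ ∧ coord v j₀ i₀ ≠ 0 ∧
      ∀ j i, toLex (j, i) < toLex (j₀, i₀) → 2 * i + 1 ≤ n j → coord v j i = 0 := by
  obtain ⟨j, i, hi, hne⟩ := hv
  obtain ⟨⟨j₀, i₀⟩, ⟨hi₀, hne₀⟩, hmin⟩ := wellFounded_lt.has_min
    {p : Fin k ×ₗ ℕ | 2 * (ofLex p).2 + 1 ≤ n (ofLex p).1 ∧ coord v (ofLex p).1 (ofLex p).2 ≠ 0}
    ⟨toLex (j, i), show 2 * (i : ℕ) + 1 ≤ n j ∧ coord v j i ≠ 0 by rw [coord_coe]; exact ⟨hi, hne⟩⟩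
  exact ⟨j₀, i₀, hi₀, hne₀, fun j i hlt hi =>
    not_not.1 fun hne => hmin (toLex (j, i)) ⟨hi, hne⟩ hlt⟩

theorem coord_eq_zero_of_agree {v w : ι → 𝕜}
    (hvw : ∀ t ∈ invariantFamily 𝕜 k n, eval v t = eval w t) {j : Fin k} {i : ℕ}
    (hi : 2 * i ≤ n j) (hv : ∀ q ≤ i, coord v j q = 0) : ∀ q ≤ i, coord w j q = 0 :=
  coord_eq_zero_of_eval_fP fun m hm => by
    rw [← hvw _ (fP_mem_invariantFamily (by omega)),
      eval_fP_eq_zero_iff fun q hq => hv q (by omega)]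
    exact hv m hm

theorem flow_eq_of_eval_eps_eq {v w : ι → 𝕜} {s : MvPolynomial ι 𝕜}
    (hv : eval v (Dw 𝕜 k n s) ≠ 0) (hw : eval w (Dw 𝕜 k n s) = eval v (Dw 𝕜 k n s))
    {j : Fin k} (i : Fin (n j + 1))
    (h : eval v (eps 𝕜 k n s (Xv 𝕜 k n j i) i) = eval w (eps 𝕜 k n s (Xv 𝕜 k n j i) i)) :
    flow (-eval v s / eval v (Dw 𝕜 k n s)) v ⟨j, i⟩ =
      flow (-eval w s / eval w (Dw 𝕜 k n s)) w ⟨j, i⟩ := by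
  rw [eval_eps_Xv hv, eval_eps_Xv (hw ▸ hv), hw] at h
  rw [hw]
  exact mul_left_cancel₀ (pow_ne_zero _ hv) h

theorem eval_eq_of_agree_on_invariantFamily {v w : ι → 𝕜}
    (hvw : ∀ t ∈ invariantFamily 𝕜 k n, eval v t = eval w t)
    (hv : ∃ (j : Fin k) (i : Fin (n j + 1)), 2 * (i : ℕ) + 1 ≤ n j ∧ v ⟨j, i⟩ ≠ 0)
    {f : MvPolynomial ι 𝕜} (hf : Dw 𝕜 k n f = 0) : eval v f = eval w f := by
  obtain ⟨j₀, i₀, hi₀, hne, hmin⟩ := exists_lex_min_coord_ne_zero hv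
  set s := sP 𝕜 k n j₀ i₀
  have hDs : Dw 𝕜 k n s = fP 𝕜 k n j₀ i₀ := Dw_sP hi₀
  have hsv : eval v (Dw 𝕜 k n s) ≠ 0 := by
    rwa [hDs, Ne, eval_fP_eq_zero_iff fun q hq =>
      hmin j₀ q (Prod.Lex.toLex_lt_toLex.2 (Or.inr ⟨rfl, hq⟩)) (by omega)]
  have hsw : eval w (Dw 𝕜 k n s) = eval v (Dw 𝕜 k n s) := by
    rw [hDs, hvw _ (fP_mem_invariantFamily (by omega))]
  have hflow : flow (-eval v s / eval v (Dw 𝕜 k n s)) v =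
      flow (-eval w s / eval w (Dw 𝕜 k n s)) w := by
    funext ⟨j, i⟩
    by_cases hlow : ∀ q ≤ (i : ℕ), toLex (j, q) < toLex (j₀, i₀) ∧ 2 * q + 1 ≤ n j
    · have hv0 : ∀ q ≤ (i : ℕ), coord v j q = 0 := fun q hq =>
        hmin j q (hlow q hq).1 (hlow q hq).2
      have hw0 := coord_eq_zero_of_agree hvw (by linarith [(hlow i le_rfl).2]) hv0
      rw [flow_apply_eq_zero _ hv0, flow_apply_eq_zero _ hw0]
    · refine flow_eq_of_eval_eps_eq hsv hsw i
        (hvw _ (eps_mem_invariantFamily (Nat.le_of_lt_succ i.isLt) hi₀ ?_))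
      push Not at hlow
      obtain ⟨q, hq, hlow⟩ := hlow
      simp only [Prod.Lex.toLex_lt_toLex] at hlow
      rcases lt_trichotomy j j₀ with hlt | rfl | hgt
      · exact Or.inl ⟨hlt, by linarith [hlow (Or.inl hlt)]⟩
      · refine Or.inr (Or.inl ⟨rfl, not_lt.1 fun hlt => ?_⟩)
        linarith [hlow (Or.inr ⟨rfl, by omega⟩)]
      · exact Or.inr (Or.inr hgt)
  calc eval v f = eval (flow _ v) f := (eval_flow_of_Dw_eq_zero hf _ v).symm
    _ = eval (flow _ w) f := by rw [hflow]
    _ = eval w f := eval_flow_of_Dw_eq_zero hf _ w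

end Weitzenbock

theorem T'_separates_off_Z_general (𝕜 : Type) [Field 𝕜] [CharZero 𝕜] (k : ℕ)
    (n : Fin k → ℕ)
    (T' : Set (MvPolynomial (Σ j : Fin k, Fin (n j + 1)) 𝕜))
    (hT' : T' =
      -- (1)  f_{i,j},  1 ≤ j ≤ k,  0 ≤ i ≤ ⌊n_j/2⌋
      {p | ∃ (j : Fin k) (i : ℕ), 2 * i ≤ n j ∧ p = fP 𝕜 k n j i} ∪
      -- (2)  ε_{s_{i₂,j₂}}(x_{i₁,j₁}),  j₁ < j₂,  ⌊(n_{j₁}-1)/2⌋ < i₁ ≤ n_{j₁},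
      --      0 ≤ i₂ ≤ ⌊(n_{j₂}-1)/2⌋  (note ν(x_{i₁,j₁}) = i₁)
      {p | ∃ (j1 j2 : Fin k) (i1 i2 : ℕ), j1 < j2 ∧ n j1 ≤ 2 * i1 ∧ i1 ≤ n j1 ∧
        2 * i2 + 1 ≤ n j2 ∧ p = eps 𝕜 k n (sP 𝕜 k n j2 i2) (Xv 𝕜 k n j1 i1) i1} ∪
      -- (3)  ε_{s_{i₂,j}}(x_{i₁,j}),  0 ≤ i₂ ≤ ⌊(n_j-1)/2⌋,  i₂ ≤ i₁ ≤ n_j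
      {p | ∃ (j : Fin k) (i1 i2 : ℕ), 2 * i2 + 1 ≤ n j ∧ i2 ≤ i1 ∧ i1 ≤ n j ∧
        p = eps 𝕜 k n (sP 𝕜 k n j i2) (Xv 𝕜 k n j i1) i1} ∪
      -- (4)  ε_{s_{i₂,j₂}}(x_{i₁,j₁}),  j₂ < j₁,  0 ≤ i₁ ≤ n_{j₁},  0 ≤ i₂ ≤ ⌊(n_{j₂}-1)/2⌋
      {p | ∃ (j1 j2 : Fin k) (i1 i2 : ℕ), j2 < j1 ∧ i1 ≤ n j1 ∧ 2 * i2 + 1 ≤ n j2 ∧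
        p = eps 𝕜 k n (sP 𝕜 k n j2 i2) (Xv 𝕜 k n j1 i1) i1})
    -- `Z` is the set of points with `a_{i,j} = 0` for all `0 ≤ i ≤ ⌊(n_j-1)/2⌋`
    (Z : Set ((Σ j : Fin k, Fin (n j + 1)) → 𝕜))
    (hZ : Z = {v | ∀ (j : Fin k) (i : Fin (n j + 1)), 2 * (i : ℕ) + 1 ≤ n j → v ⟨j, i⟩ = 0}) :
    ∀ v w : (Σ j : Fin k, Fin (n j + 1)) → 𝕜, ¬(v ∈ Z ∧ w ∈ Z) →
      (∃ f, Dw 𝕜 k n f = 0 ∧ eval v f ≠ eval w f) →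
      ∃ t ∈ T', eval v t ≠ eval w t := by
  subst hT' hZ
  rintro v w hvw ⟨f, hf, hne⟩
  by_contra! hagree
  simp only [Set.mem_ofPred_eq, not_and_or, not_forall, exists_prop] at hvw
  rcases hvw with hv | hw
  · exact hne (Weitzenbock.eval_eq_of_agree_on_invariantFamily hagree hv hf)
  · exact hne (Weitzenbock.eval_eq_of_agree_on_invariantFamily
      (fun t ht => (hagree t ht).symm) hw hf).symm

theorem T'_separates_off_Z (𝕜 : Type) [Field 𝕜] [CharZero 𝕜] (k : ℕ) (hk : 2 ≤ k)
    (n : Fin k → ℕ)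
    (T' : Set (MvPolynomial (Σ j : Fin k, Fin (n j + 1)) 𝕜))
    (hT' : T' =
      -- (1)  f_{i,j},  1 ≤ j ≤ k,  0 ≤ i ≤ ⌊n_j/2⌋
      {p | ∃ (j : Fin k) (i : ℕ), 2 * i ≤ n j ∧ p = fP 𝕜 k n j i} ∪
      -- (2)  ε_{s_{i₂,j₂}}(x_{i₁,j₁}),  j₁ < j₂,  ⌊(n_{j₁}-1)/2⌋ < i₁ ≤ n_{j₁},
      --      0 ≤ i₂ ≤ ⌊(n_{j₂}-1)/2⌋  (note ν(x_{i₁,j₁}) = i₁)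
      {p | ∃ (j1 j2 : Fin k) (i1 i2 : ℕ), j1 < j2 ∧ n j1 ≤ 2 * i1 ∧ i1 ≤ n j1 ∧
        2 * i2 + 1 ≤ n j2 ∧ p = eps 𝕜 k n (sP 𝕜 k n j2 i2) (Xv 𝕜 k n j1 i1) i1} ∪
      -- (3)  ε_{s_{i₂,j}}(x_{i₁,j}),  0 ≤ i₂ ≤ ⌊(n_j-1)/2⌋,  i₂ ≤ i₁ ≤ n_j
      {p | ∃ (j : Fin k) (i1 i2 : ℕ), 2 * i2 + 1 ≤ n j ∧ i2 ≤ i1 ∧ i1 ≤ n j ∧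
        p = eps 𝕜 k n (sP 𝕜 k n j i2) (Xv 𝕜 k n j i1) i1} ∪
      -- (4)  ε_{s_{i₂,j₂}}(x_{i₁,j₁}),  j₂ < j₁,  0 ≤ i₁ ≤ n_{j₁},  0 ≤ i₂ ≤ ⌊(n_{j₂}-1)/2⌋
      {p | ∃ (j1 j2 : Fin k) (i1 i2 : ℕ), j2 < j1 ∧ i1 ≤ n j1 ∧ 2 * i2 + 1 ≤ n j2 ∧
        p = eps 𝕜 k n (sP 𝕜 k n j2 i2) (Xv 𝕜 k n j1 i1) i1})
    -- `Z` is the set of points with `a_{i,j} = 0` for all `0 ≤ i ≤ ⌊(n_j-1)/2⌋`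
    (Z : Set ((Σ j : Fin k, Fin (n j + 1)) → 𝕜))
    (hZ : Z = {v | ∀ (j : Fin k) (i : Fin (n j + 1)), 2 * (i : ℕ) + 1 ≤ n j → v ⟨j, i⟩ = 0}) :
    ∀ v w : (Σ j : Fin k, Fin (n j + 1)) → 𝕜, ¬(v ∈ Z ∧ w ∈ Z) →
      (∃ f, Dw 𝕜 k n f = 0 ∧ eval v f ≠ eval w f) →
      ∃ t ∈ T', eval v t ≠ eval w t :=
  T'_separates_off_Z_general 𝕜 k n T' hT' Z hZ
end

section
/- Let 0 ≤ l′ ≤ l be integers, A = 𝕜[x_1, …, x_l], and let σ be the 𝕜-algebra automorphism of A with σ(x_j) = −x_j for 1 ≤ j ≤ l′ and σ(x_j) = x_j for l′ < j ≤ l. For each pair 1 ≤ j₁ < j₂ ≤ l′ fix odd positive integers a_{j₁,j₂} and b_{j₁,j₂} and a non-zero scalar d_{j₁,j₂} ∈ 𝕜, and let B = {x_j² : 1 ≤ j ≤ l} ∪ {d_{j₁,j₂} x_{j₁}^{a_{j₁,j₂}} x_{j₂}^{b_{j₁,j₂}} : 1 ≤ j₁ < j₂ ≤ l′} ∪ {x_j³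 : l′ < j ≤ l}. Then B is a separating set for the σ-invariants: for all points u, v ∈ 𝕜^l, if g(u) = g(v) for every g ∈ B, then h(u) = h(v) for every polynomial h ∈ A with σ(h) = h. -/
/- STATEMENT 13: the set `B = {x_j²} ∪ {d x_{j₁}^a x_{j₂}^b} ∪ {x_j³}` is a separating set
for the invariants of the order-two automorphism `σ` of `𝕜[x_1,…,x_l]` negating the first
`l'` variables. -/

open MvPolynomial

theorem B_separates_C2_invariants (𝕜 : Type) [Field 𝕜] [CharZero 𝕜]
    (l' l : ℕ) (hl : l' ≤ l)
    (a b : Fin l → Fin l → ℕ) (d : Fin l → Fin l → 𝕜)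
    -- the exponents are odd (hence positive) and the scalars non-zero
    (hdata : ∀ j1 j2 : Fin l, (j1 : ℕ) < l' → (j2 : ℕ) < l' → j1 < j2 →
      Odd (a j1 j2) ∧ Odd (b j1 j2) ∧ d j1 j2 ≠ 0)
    -- `σ` negates the first `l'` variables and fixes the rest
    (σ : MvPolynomial (Fin l) 𝕜 →ₐ[𝕜] MvPolynomial (Fin l) 𝕜)
    (hσ : σ = aeval fun j : Fin l => if (j : ℕ) < l' then -X j else X j)
    (B : Set (MvPolynomial (Fin l) 𝕜))
    (hB : B = {p | ∃ j : Fin l, p = X j ^ 2} ∪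
      {p | ∃ j1 j2 : Fin l, (j1 : ℕ) < l' ∧ (j2 : ℕ) < l' ∧ j1 < j2 ∧
        p = C (d j1 j2) * X j1 ^ a j1 j2 * X j2 ^ b j1 j2} ∪
      {p | ∃ j : Fin l, l' ≤ (j : ℕ) ∧ p = X j ^ 3}) :
    ∀ u v : Fin l → 𝕜, (∀ g ∈ B, eval u g = eval v g) →
      ∀ h : MvPolynomial (Fin l) 𝕜, σ h = h → eval u h = eval v h := by
  subst hσ hB
  intro u v hgv h hh
  -- squares agree
  have hsq : ∀ j : Fin l, (u j) ^ 2 = (v j) ^ 2 := by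
    intro j
    have := hgv (X j ^ 2) (Or.inl (Or.inl ⟨j, rfl⟩))
    simpa using this
  have hzero : ∀ j : Fin l, u j = 0 → v j = 0 := by
    intro j hj
    have h2 := (hsq j).symm
    rw [hj] at h2
    exact pow_eq_zero_iff two_ne_zero |>.mp (by simpa using h2)
  have hor : ∀ j : Fin l, v j = u j ∨ v j = - u j := by
    intro j
    have h2 : (u j - v j) * (u j + v j) = 0 := by linear_combination hsq j
    rcases mul_eq_zero.mp h2 with h1 | h1
    · left; linear_combination -h1
    · right; linear_combination h1
  -- cubes: coordinates beyond l' agree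
  have hhigh : ∀ j : Fin l, l' ≤ (j : ℕ) → v j = u j := by
    intro j hj
    have h3 := hgv (X j ^ 3) (Or.inr ⟨j, hj, rfl⟩)
    simp only [map_pow, eval_X] at h3
    rcases hor j with h1 | h1
    · exact h1
    · rw [h1] at h3
      have hu : u j = 0 := by
        have h4 : (2 : 𝕜) * (u j) ^ 3 = 0 := by linear_combination h3
        rcases mul_eq_zero.mp h4 with h5 | h5
        · exact absurd h5 two_ne_zero
        · exact pow_eq_zero_iff three_ne_zero |>.mp h5
      rw [h1, hu, neg_zero]
  -- pair relation
  have hpairs : ∀ j1 j2 : Fin l, (j1 : ℕ) < l' → (j2 : ℕ) < l' → j1 < j2 →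
      u j1 ^ a j1 j2 * u j2 ^ b j1 j2 = v j1 ^ a j1 j2 * v j2 ^ b j1 j2 := by
    intro j1 j2 h1 h2 h12
    have hp := hgv _ (Or.inl (Or.inr ⟨j1, j2, h1, h2, h12, rfl⟩))
    simp only [map_mul, map_pow, eval_X, eval_C] at hp
    obtain ⟨_, _, hd⟩ := hdata j1 j2 h1 h2 h12
    have hp' : d j1 j2 * (u j1 ^ a j1 j2 * u j2 ^ b j1 j2)
        = d j1 j2 * (v j1 ^ a j1 j2 * v j2 ^ b j1 j2) := by linear_combination hp
    exact mul_left_cancel₀ hd hp'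
  -- mixed signs impossible
  have hmix : ∀ j1 j2 : Fin l, (j1 : ℕ) < l' → (j2 : ℕ) < l' → j1 < j2 →
      u j1 ≠ 0 → u j2 ≠ 0 → (v j1 = u j1 ↔ v j2 = u j2) := by
    intro j1 j2 h1 h2 h12 hu1 hu2
    obtain ⟨ha, hb, _⟩ := hdata j1 j2 h1 h2 h12
    have hp := hpairs j1 j2 h1 h2 h12
    have hP : u j1 ^ a j1 j2 * u j2 ^ b j1 j2 ≠ 0 :=
      mul_ne_zero (pow_ne_zero _ hu1) (pow_ne_zero _ hu2)
    constructor
    · intro e1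
      rcases hor j2 with e2 | e2
      · exact e2
      · exfalso
        rw [e1, e2, hb.neg_pow] at hp
        rw [mul_neg] at hp
        have h4 : (2 : 𝕜) * (u j1 ^ a j1 j2 * u j2 ^ b j1 j2) = 0 := by linear_combination hp
        rcases mul_eq_zero.mp h4 with h5 | h5
        · exact absurd h5 two_ne_zero
        · exact hP h5
    · intro e2
      rcases hor j1 with e1 | e1
      · exact e1
      · exfalso
        rw [e2, e1, ha.neg_pow] at hp
        rw [neg_mul] at hp
        have h4 : (2 : 𝕜) * (u j1 ^ a j1 j2 * u j2 ^ b j1 j2) = 0 := by linear_combination hp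
        rcases mul_eq_zero.mp h4 with h5 | h5
        · exact absurd h5 two_ne_zero
        · exact hP h5
  -- evaluation under the flip
  have hflip : ∀ w : Fin l → 𝕜,
      eval w h = eval (fun j : Fin l => if (j : ℕ) < l' then -w j else w j) h := by
    intro w
    conv_lhs => rw [← hh]
    rw [aeval_eq_bind₁]
    show eval₂Hom (RingHom.id 𝕜) w _ = _
    rw [eval₂Hom_bind₁]
    have he : (fun i : Fin l => eval₂Hom (RingHom.id 𝕜) w (if (i : ℕ) < l' then -X i else X i))
        = fun i : Fin l => if (i : ℕ) < l' then -w i else w i := by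
      funext i
      by_cases hi : (i : ℕ) < l' <;> simp [hi]
    rw [he]
    rfl
  by_cases hcase : ∃ j0 : Fin l, (j0 : ℕ) < l' ∧ u j0 ≠ 0 ∧ v j0 = - u j0
  · obtain ⟨j0, hj0, hu0, hv0⟩ := hcase
    have hv : v = fun j : Fin l => if (j : ℕ) < l' then -u j else u j := by
      funext j
      by_cases hj : (j : ℕ) < l'
      · simp only [hj, if_pos]
        by_cases huj : u j = 0
        · rw [hzero j huj, huj, neg_zero]
        · rcases hor j with e | e
          · exfalso
            rcases lt_trichotomy j j0 with hlt | heq | hgt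
            · have hx := (hmix j j0 hj hj0 hlt huj hu0).mp e
              rw [hv0] at hx
              exact hu0 (by linear_combination -hx / 2)
            · rw [heq] at e
              have hx := e.symm.trans hv0
              exact hu0 (by linear_combination hx / 2)
            · have hx := (hmix j0 j hj0 hj hgt hu0 huj).mpr e
              rw [hv0] at hx
              exact hu0 (by linear_combination -hx / 2)
          · exact e
      · simp only [hj, if_neg]
        exact hhigh j (not_lt.mp hj)
    rw [hv, ← hflip u]
  · push_neg at hcase
    have hv : v = u := by
      funext j
      by_cases hj : (j : ℕ) < l'
      · by_cases huj : u j = 0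
        · rw [hzero j huj, huj]
        · rcases hor j with e | e
          · exact e
          · exact absurd e (hcase j hj huj)
      · exact hhigh j (not_lt.mp hj)
    rw [hv]
end

section
/- Assume k ≥ 2 and let T ⊆ ker D be the union of the six families: (1) f_{i,j} for 1 ≤ j ≤ k, 0 ≤ i ≤ ⌊n_j/2⌋; (2) ε_{s_{i₂,j₂}}(x_{i₁,j₁}) for 1 ≤ j₁ < j₂ ≤ k, ⌊(n_{j₁}−1)/2⌋ < i₁ ≤ n_{j₁}, 0 ≤ i₂ ≤ ⌊(n_{j₂}−1)/2⌋; (3) ε_{s_{i₂,j}}(x_{i₁,j}) for 1 ≤ j ≤ k, 0 ≤ i₂ ≤ ⌊(n_j−1)/2⌋, i₂ ≤ i₁ ≤ n_j; (4) ε_{s_{i₂,j₂}}(x_{i₁,j₁}) for 1 ≤ j₂ < j₁ ≤ k, 0 ≤ i₁ ≤ n_{j₁}, 0 ≤ i₂ ≤ ⌊(n_{j₂}−1)/2⌋; (5) w_{j₁,j₂} for 1 ≤ j₁ ≠ j₂ ≤ l′; (6) z_j for l′ < j ≤ l. Then every element of T has total degree at most 2n − 1, where n = Σ_{j=1}^{k}(n_j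 + 1). -/
/-! Both `D` and every `Δ_j` send each variable to a scalar multiple of a variable, so neither
raises total degree. Hence `f_{i,j}` and `s_{i,j}` are at most quadratic, `ε_s(x_{i,j})` has degree
at most `1 + 2i ≤ 2 n_j + 1`, `w_{j₁,j₂}` has degree at most
`N / n_{j₁} + N / n_{j₂} ≤ n_{j₂} + n_{j₁}`, and `z_j` is at most cubic. All of these are at most
`2n - 1` because `n ≥ n_j + 1`, `n ≥ (n_{j₁} + 1) + (n_{j₂} + 1)` for `j₁ ≠ j₂`, and `n ≥ k ≥ 2`. -/

open MvPolynomial Finset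

variable (𝕜 : Type) [Field 𝕜] [CharZero 𝕜] (k : ℕ) (n : Fin k → ℕ)

/-- The derivation `Δ_j` with `Δ_j x_{i,j} = (n_j - i)(i+1) x_{i+1,j}`. -/
noncomputable def Δw (j : Fin k) : Derivation 𝕜 (MvPolynomial (Σ j : Fin k, Fin (n j + 1)) 𝕜)
    (MvPolynomial (Σ j : Fin k, Fin (n j + 1)) 𝕜) :=
  mkDerivation 𝕜 fun v =>
    if v.1 = j then C ((((n v.1 - (v.2 : ℕ)) * ((v.2 : ℕ) + 1) : ℕ)) : 𝕜) * Xv 𝕜 k n v.1 ((v.2 : ℕ) + 1)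
    else 0

/-- The semitransvectant `w_{j₁,j₂}`. -/
noncomputable def wP (j1 j2 : Fin k) : MvPolynomial (Σ j : Fin k, Fin (n j + 1)) 𝕜 :=
  ∑ q ∈ Finset.range (Nat.lcm (n j1) (n j2) + 1),
    C ((-1 : 𝕜) ^ q * ((Nat.lcm (n j1) (n j2)).factorial : 𝕜)) *
      ((⇑(Δw 𝕜 k n j1))^[Nat.lcm (n j1) (n j2) - q] (Xv 𝕜 k n j1 0 ^ (Nat.lcm (n j1) (n j2) / n j1))) *
      ((⇑(Δw 𝕜 k n j2))^[q] (Xv 𝕜 k n j2 0 ^ (Nat.lcm (n j1) (n j2) / n j2)))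

/-- The semitransvectant `z_j`. -/
noncomputable def zP (j : Fin k) : MvPolynomial (Σ j : Fin k, Fin (n j + 1)) 𝕜 :=
  ∑ q ∈ Finset.range (n j + 1),
    C ((-1 : 𝕜) ^ q * ((n j).factorial : 𝕜)) *
      ((⇑(Δw 𝕜 k n j))^[n j - q] (Xv 𝕜 k n j 0)) *
      ((⇑(Δw 𝕜 k n j))^[q] (fP 𝕜 k n j (n j / 4)))

namespace MvPolynomial

variable {R σ : Type*} [CommSemiring R]

theorem totalDegree_C_mul_le (a : R) (p : MvPolynomial σ R) :
    (C a * p).totalDegree ≤ p.totalDegree := by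
  rw [C_mul']
  exact totalDegree_smul_le a p

theorem totalDegree_derivation_le (D : Derivation R (MvPolynomial σ R) (MvPolynomial σ R))
    (hD : ∀ i, (D (X i)).totalDegree ≤ 1) (p : MvPolynomial σ R) :
    (D p).totalDegree ≤ p.totalDegree := by
  have hmk : D = mkDerivation R (fun i => D (X i)) :=
    derivation_ext fun i => (mkDerivation_X R (fun i => D (X i)) i).symm
  conv_lhs => rw [p.as_sum, map_sum]
  refine totalDegree_finsetSum_le fun s hs => ?_
  rw [hmk, mkDerivation_monomial]
  refine (totalDegree_smul_le _ _).trans ((totalDegree_finsetSum_le fun i hi => ?_).trans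
    (le_totalDegree hs))
  have hle : Finsupp.single i 1 ≤ s :=
    Finsupp.single_le_iff.2 (Nat.one_le_iff_ne_zero.2 (Finsupp.mem_support_iff.1 hi))
  calc _ ≤ (s - Finsupp.single i 1).degree + 1 :=
        (totalDegree_mul _ _).trans (add_le_add (totalDegree_monomial_le _ _) (hD i))
    _ = (s - Finsupp.single i 1 + Finsupp.single i 1).degree := by
        rw [map_add, Finsupp.degree_single]
    _ = s.degree := by rw [tsub_add_cancel_of_le hle]

theorem totalDegree_iterate_derivation_le
    (D : Derivation R (MvPolynomial σ R) (MvPolynomial σ R))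
    (hD : ∀ i, (D (X i)).totalDegree ≤ 1) (m : ℕ) (p : MvPolynomial σ R) :
    ((⇑D)^[m] p).totalDegree ≤ p.totalDegree := by
  induction m generalizing p with
  | zero => rfl
  | succ m ih => exact (ih (D p)).trans (totalDegree_derivation_le D hD p)

end MvPolynomial

theorem Nat.lcm_div_left_le (a b : ℕ) : Nat.lcm a b / a ≤ b := by
  refine Nat.div_le_of_le_mul ?_
  rcases Nat.eq_zero_or_pos (a * b) with h | h
  · rcases Nat.mul_eq_zero.1 h with rfl | rfl <;> simp
  · exact Nat.le_of_dvd h (Nat.lcm_dvd_mul a b)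

theorem Finset.add_le_sum_univ_of_ne {ι M : Type*} [Fintype ι] [AddCommMonoid M] [PartialOrder M]
    [IsOrderedAddMonoid M] [CanonicallyOrderedAdd M] (f : ι → M) {i j : ι} (hij : i ≠ j) :
    f i + f j ≤ ∑ l, f l := by
  classical
  rw [← sum_pair hij]
  exact sum_le_sum_of_subset (subset_univ _)

section Invariants

variable {𝕜 : Type} [Field 𝕜] {k : ℕ} {n : Fin k → ℕ}

theorem totalDegree_Xv_le (j : Fin k) (i : ℕ) : (Xv 𝕜 k n j i).totalDegree ≤ 1 := by
  unfold Xv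
  split
  · exact (totalDegree_X _).le
  · simp

theorem totalDegree_Dw_X_le (v : Σ j : Fin k, Fin (n j + 1)) :
    (Dw 𝕜 k n (X v)).totalDegree ≤ 1 := by
  rw [Dw, mkDerivation_X]
  split
  · simp
  · exact totalDegree_Xv_le _ _

theorem totalDegree_Δw_X_le (j : Fin k) (v : Σ j : Fin k, Fin (n j + 1)) :
    (Δw 𝕜 k n j (X v)).totalDegree ≤ 1 := by
  rw [Δw, mkDerivation_X]
  split
  · exact (totalDegree_C_mul_le _ _).trans (totalDegree_Xv_le _ _)
  · simp

theorem totalDegree_C_mul_Xv_mul_Xv_le (c : 𝕜) (j : Fin k) (a b : ℕ) :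
    (C c * Xv 𝕜 k n j a * Xv 𝕜 k n j b).totalDegree ≤ 2 :=
  (totalDegree_mul _ _).trans (add_le_add ((totalDegree_C_mul_le _ _).trans
    (totalDegree_Xv_le j a)) (totalDegree_Xv_le j b))

theorem totalDegree_fP_le (j : Fin k) (i : ℕ) : (fP 𝕜 k n j i).totalDegree ≤ 2 := by
  unfold fP
  split
  · exact (totalDegree_Xv_le j 0).trans one_le_two
  · refine (totalDegree_add _ _).trans (max_le ?_ ?_)
    · exact totalDegree_finsetSum_le fun q _ => totalDegree_C_mul_Xv_mul_Xv_le _ j _ _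
    · rw [sq, ← mul_assoc]
      exact totalDegree_C_mul_Xv_mul_Xv_le _ j i i

theorem totalDegree_sP_le (j : Fin k) (i : ℕ) : (sP 𝕜 k n j i).totalDegree ≤ 2 := by
  unfold sP
  split
  · exact (totalDegree_Xv_le j 1).trans one_le_two
  · exact totalDegree_finsetSum_le fun q _ => totalDegree_C_mul_Xv_mul_Xv_le _ j _ _

theorem totalDegree_eps_le {s f : MvPolynomial (Σ j : Fin k, Fin (n j + 1)) 𝕜} {a b : ℕ}
    (hf : f.totalDegree ≤ a) (hs : s.totalDegree ≤ b) (ν : ℕ) :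
    (eps 𝕜 k n s f ν).totalDegree ≤ a + ν * b := by
  refine totalDegree_finsetSum_le fun q hq => ?_
  have hq : q ≤ ν := Nat.lt_succ_iff.1 (mem_range.1 hq)
  have hDf : ((⇑(Dw 𝕜 k n))^[q] f).totalDegree ≤ a :=
    (totalDegree_iterate_derivation_le _ totalDegree_Dw_X_le q f).trans hf
  have hsq : (s ^ q).totalDegree ≤ q * b :=
    (totalDegree_pow _ _).trans (Nat.mul_le_mul_left _ hs)
  have hDs : (Dw 𝕜 k n s ^ (ν - q)).totalDegree ≤ (ν - q) * b :=
    (totalDegree_pow _ _).trans (Nat.mul_le_mul_left _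
      ((totalDegree_derivation_le _ totalDegree_Dw_X_le s).trans hs))
  calc _ ≤ a + q * b + (ν - q) * b :=
        (totalDegree_mul _ _).trans (add_le_add ((totalDegree_mul _ _).trans
          (add_le_add ((totalDegree_C_mul_le _ _).trans hDf) hsq)) hDs)
    _ = a + ν * b := by rw [add_assoc, ← add_mul, Nat.add_sub_cancel' hq]

theorem totalDegree_wP_le (j1 j2 : Fin k) : (wP 𝕜 k n j1 j2).totalDegree ≤ n j2 + n j1 := by
  refine totalDegree_finsetSum_le fun q _ => ?_
  have hpow (j : Fin k) (e : ℕ) : (Xv 𝕜 k n j 0 ^ e).totalDegree ≤ e :=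
    (totalDegree_pow _ _).trans (by simpa using Nat.mul_le_mul_left e (totalDegree_Xv_le j 0))
  refine (totalDegree_mul _ _).trans (add_le_add ((totalDegree_C_mul_le _ _).trans ?_) ?_)
  · exact ((totalDegree_iterate_derivation_le _ (totalDegree_Δw_X_le j1) _ _).trans
      (hpow j1 _)).trans (Nat.lcm_div_left_le _ _)
  · refine ((totalDegree_iterate_derivation_le _ (totalDegree_Δw_X_le j2) _ _).trans
      (hpow j2 _)).trans ?_
    rw [Nat.lcm_comm]
    exact Nat.lcm_div_left_le _ _

theorem totalDegree_zP_le (j : Fin k) : (zP 𝕜 k n j).totalDegree ≤ 3 :=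
  totalDegree_finsetSum_le fun _ _ => (totalDegree_mul _ _).trans (add_le_add
    ((totalDegree_C_mul_le _ _).trans ((totalDegree_iterate_derivation_le _
      (totalDegree_Δw_X_le j) _ _).trans (totalDegree_Xv_le j 0)))
    ((totalDegree_iterate_derivation_le _ (totalDegree_Δw_X_le j) _ _).trans
      (totalDegree_fP_le j _)))

end Invariants

theorem T_degree_bound_general (𝕜 : Type) [Field 𝕜] (k : ℕ) (hk : 2 ≤ k)
    (n : Fin k → ℕ) (l' l : ℕ)
    (T : Set (MvPolynomial (Σ j : Fin k, Fin (n j + 1)) 𝕜))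
    (hT : T =
      -- (1)  f_{i,j},  1 ≤ j ≤ k,  0 ≤ i ≤ ⌊n_j/2⌋
      {p | ∃ (j : Fin k) (i : ℕ), 2 * i ≤ n j ∧ p = fP 𝕜 k n j i} ∪
      -- (2)  ε_{s_{i₂,j₂}}(x_{i₁,j₁}),  j₁ < j₂,  ⌊(n_{j₁}-1)/2⌋ < i₁ ≤ n_{j₁},
      --      0 ≤ i₂ ≤ ⌊(n_{j₂}-1)/2⌋  (note ν(x_{i₁,j₁}) = i₁)
      {p | ∃ (j1 j2 : Fin k) (i1 i2 : ℕ), j1 < j2 ∧ n j1 ≤ 2 * i1 ∧ i1 ≤ n j1 ∧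
        2 * i2 + 1 ≤ n j2 ∧ p = eps 𝕜 k n (sP 𝕜 k n j2 i2) (Xv 𝕜 k n j1 i1) i1} ∪
      -- (3)  ε_{s_{i₂,j}}(x_{i₁,j}),  0 ≤ i₂ ≤ ⌊(n_j-1)/2⌋,  i₂ ≤ i₁ ≤ n_j
      {p | ∃ (j : Fin k) (i1 i2 : ℕ), 2 * i2 + 1 ≤ n j ∧ i2 ≤ i1 ∧ i1 ≤ n j ∧
        p = eps 𝕜 k n (sP 𝕜 k n j i2) (Xv 𝕜 k n j i1) i1} ∪
      -- (4)  ε_{s_{i₂,j₂}}(x_{i₁,j₁}),  j₂ < j₁,  0 ≤ i₁ ≤ n_{j₁},  0 ≤ i₂ ≤ ⌊(n_{j₂}-1)/2⌋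
      {p | ∃ (j1 j2 : Fin k) (i1 i2 : ℕ), j2 < j1 ∧ i1 ≤ n j1 ∧ 2 * i2 + 1 ≤ n j2 ∧
        p = eps 𝕜 k n (sP 𝕜 k n j2 i2) (Xv 𝕜 k n j1 i1) i1} ∪
      -- (5)  w_{j₁,j₂},  1 ≤ j₁ ≠ j₂ ≤ l'
      {p | ∃ j1 j2 : Fin k, j1 ≠ j2 ∧ (j1 : ℕ) < l' ∧ (j2 : ℕ) < l' ∧ p = wP 𝕜 k n j1 j2} ∪
      -- (6)  z_j,  l' < j ≤ l
      {p | ∃ j : Fin k, l' ≤ (j : ℕ) ∧ (j : ℕ) < l ∧ p = zP 𝕜 k n j}) :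
    ∀ t ∈ T, t.totalDegree ≤ 2 * (∑ j, (n j + 1)) - 1 := by
  intro t ht
  set N := ∑ j, (n j + 1)
  have hN_one (j : Fin k) : n j + 1 ≤ N :=
    single_le_sum (f := fun j => n j + 1) (fun _ _ => Nat.zero_le _) (mem_univ j)
  have hN_two (j1 j2 : Fin k) (h : j1 ≠ j2) : n j1 + 1 + (n j2 + 1) ≤ N :=
    add_le_sum_univ_of_ne (fun j => n j + 1) h
  have hN : 2 ≤ N := (hN_two ⟨0, by omega⟩ ⟨1, by omega⟩ (by simp [Fin.ext_iff])).trans' (by omega)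
  have heps (j1 j2 : Fin k) (i1 i2 : ℕ) (hi : i1 ≤ n j1) :
      (eps 𝕜 k n (sP 𝕜 k n j2 i2) (Xv 𝕜 k n j1 i1) i1).totalDegree ≤ 2 * N - 1 :=
    (totalDegree_eps_le (totalDegree_Xv_le j1 i1) (totalDegree_sP_le j2 i2) i1).trans
      (by have := hN_one j1; omega)
  subst hT
  rcases ht with ((((⟨j, i, -, rfl⟩ | ⟨j1, j2, i1, i2, -, -, hi, -, rfl⟩) |
    ⟨j1, i1, i2, -, -, hi, rfl⟩) | ⟨j1, j2, i1, i2, -, hi, -, rfl⟩) | ⟨j1, j2, hj, -, -, rfl⟩) |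
    ⟨j, -, -, rfl⟩
  · exact (totalDegree_fP_le j i).trans (by omega)
  · exact heps j1 j2 i1 i2 hi
  · exact heps j1 j1 i1 i2 hi
  · exact heps j1 j2 i1 i2 hi
  · exact (totalDegree_wP_le j1 j2).trans (by have := hN_two j1 j2 hj; omega)
  · exact (totalDegree_zP_le j).trans (by omega)

theorem T_degree_bound (𝕜 : Type) [Field 𝕜] [CharZero 𝕜] (k : ℕ) (hk : 2 ≤ k)
    (n : Fin k → ℕ) (l' l : ℕ) (hl'l : l' ≤ l) (hlk : l ≤ k)
    -- `n_j ≡ 2 (mod 4)` for `j < l'`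
    (h2 : ∀ j : Fin k, (j : ℕ) < l' → n j % 4 = 2)
    -- `n_j ≡ 0 (mod 4)` for `l' ≤ j < l`
    (h0 : ∀ j : Fin k, l' ≤ (j : ℕ) → (j : ℕ) < l → n j % 4 = 0)
    -- `n_j` odd for `l ≤ j`
    (hodd : ∀ j : Fin k, l ≤ (j : ℕ) → Odd (n j))
    (T : Set (MvPolynomial (Σ j : Fin k, Fin (n j + 1)) 𝕜))
    (hT : T =
      -- (1)  f_{i,j},  1 ≤ j ≤ k,  0 ≤ i ≤ ⌊n_j/2⌋
      {p | ∃ (j : Fin k) (i : ℕ), 2 * i ≤ n j ∧ p = fP 𝕜 k n j i} ∪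
      -- (2)  ε_{s_{i₂,j₂}}(x_{i₁,j₁}),  j₁ < j₂,  ⌊(n_{j₁}-1)/2⌋ < i₁ ≤ n_{j₁},
      --      0 ≤ i₂ ≤ ⌊(n_{j₂}-1)/2⌋  (note ν(x_{i₁,j₁}) = i₁)
      {p | ∃ (j1 j2 : Fin k) (i1 i2 : ℕ), j1 < j2 ∧ n j1 ≤ 2 * i1 ∧ i1 ≤ n j1 ∧
        2 * i2 + 1 ≤ n j2 ∧ p = eps 𝕜 k n (sP 𝕜 k n j2 i2) (Xv 𝕜 k n j1 i1) i1} ∪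
      -- (3)  ε_{s_{i₂,j}}(x_{i₁,j}),  0 ≤ i₂ ≤ ⌊(n_j-1)/2⌋,  i₂ ≤ i₁ ≤ n_j
      {p | ∃ (j : Fin k) (i1 i2 : ℕ), 2 * i2 + 1 ≤ n j ∧ i2 ≤ i1 ∧ i1 ≤ n j ∧
        p = eps 𝕜 k n (sP 𝕜 k n j i2) (Xv 𝕜 k n j i1) i1} ∪
      -- (4)  ε_{s_{i₂,j₂}}(x_{i₁,j₁}),  j₂ < j₁,  0 ≤ i₁ ≤ n_{j₁},  0 ≤ i₂ ≤ ⌊(n_{j₂}-1)/2⌋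
      {p | ∃ (j1 j2 : Fin k) (i1 i2 : ℕ), j2 < j1 ∧ i1 ≤ n j1 ∧ 2 * i2 + 1 ≤ n j2 ∧
        p = eps 𝕜 k n (sP 𝕜 k n j2 i2) (Xv 𝕜 k n j1 i1) i1} ∪
      -- (5)  w_{j₁,j₂},  1 ≤ j₁ ≠ j₂ ≤ l'
      {p | ∃ j1 j2 : Fin k, j1 ≠ j2 ∧ (j1 : ℕ) < l' ∧ (j2 : ℕ) < l' ∧ p = wP 𝕜 k n j1 j2} ∪
      -- (6)  z_j,  l' < j ≤ l
      {p | ∃ j : Fin k, l' ≤ (j : ℕ) ∧ (j : ℕ) < l ∧ p = zP 𝕜 k n j}) :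
    ∀ t ∈ T, t.totalDegree ≤ 2 * (∑ j, (n j + 1)) - 1 :=
  T_degree_bound_general 𝕜 k hk n l' l T hT
end

section
/- Let 𝕜 be a field of characteristic zero and let C_1, …, C_m (m ≥ 1) be subsets of 𝕜, each of which is a coset of a Zariski-closed additive subgroup of 𝕜. If C_1 ∩ … ∩ C_m = ∅, then there exist indices i, j with C_i ∩ C_j = ∅. (That is, the Helly dimension of the additive group 𝔾_a over 𝕜 is at most two.) -/
/- STATEMENT 16: the Helly dimension of `𝔾ₐ` in characteristic zero is at most two: if
finitely many cosets of Zariski-closed additive subgroups of `𝕜` have empty intersection,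
then some two of them already have empty intersection. -/

lemma zariski_closed_subgroup_trivial_or_univ (𝕜 : Type) [Field 𝕜] [CharZero 𝕜]
    (H : Set 𝕜)
    (hS : ∃ S : Set (Polynomial 𝕜), H = {a : 𝕜 | ∀ p ∈ S, Polynomial.eval a p = 0})
    (h0 : (0 : 𝕜) ∈ H) (hadd : ∀ a c : 𝕜, a ∈ H → c ∈ H → a + c ∈ H) :
    H = {0} ∨ H = Set.univ := by
  by_cases hnt : ∃ h ∈ H, h ≠ 0
  · right
    obtain ⟨h, hh, hne⟩ := hnt
    have hmul : ∀ n : ℕ, (n : 𝕜) * h ∈ H := by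
      intro n
      induction n with
      | zero => simpa using h0
      | succ n ih =>
        have := hadd _ _ ih hh
        convert this using 1
        push_cast
        ring
    have hinf : H.Infinite := by
      apply Set.infinite_of_injective_forall_mem (f := fun n : ℕ => (n : 𝕜) * h)
      · intro a b hab
        simp only [mul_eq_mul_right_iff, hne, or_false] at hab
        exact_mod_cast hab
      · exact hmul
    obtain ⟨S, rfl⟩ := hS
    ext a
    simp only [Set.mem_setOf_eq, Set.mem_univ, iff_true]
    intro p hp
    have hpz : p = 0 := by
      apply Polynomial.eq_zero_of_infinite_isRoot
      apply hinf.mono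
      intro x hx
      exact hx p hp
    simp [hpz]
  · left
    push_neg at hnt
    ext x
    simp only [Set.mem_singleton_iff]
    exact ⟨fun hx => hnt x hx, fun hx => hx ▸ h0⟩

theorem helly_dimension_Ga_le_two (𝕜 : Type) [Field 𝕜] [CharZero 𝕜]
    (m : ℕ) (hm : 1 ≤ m) (C : Fin m → Set 𝕜)
    -- each `C i` is a coset `b + H` of a Zariski-closed additive subgroup `H` of `𝕜`
    (hcoset : ∀ i : Fin m, ∃ (b : 𝕜) (H : Set 𝕜),
      (∃ S : Set (Polynomial 𝕜), H = {a : 𝕜 | ∀ p ∈ S, Polynomial.eval a p = 0}) ∧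
      (0 : 𝕜) ∈ H ∧ (∀ a c : 𝕜, a ∈ H → c ∈ H → a + c ∈ H) ∧ (∀ a : 𝕜, a ∈ H → -a ∈ H) ∧
      C i = {x : 𝕜 | ∃ h ∈ H, x = b + h})
    (hempty : ⋂ i : Fin m, C i = ∅) :
    ∃ i j : Fin m, C i ∩ C j = ∅ := by
  -- each C i is a singleton or univ
  have key : ∀ i : Fin m, (∃ b : 𝕜, C i = {b}) ∨ C i = Set.univ := by
    intro i
    obtain ⟨b, H, hS, h0, hadd, _, hC⟩ := hcoset i
    rcases zariski_closed_subgroup_trivial_or_univ 𝕜 H hS h0 hadd with h | h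
    · left
      refine ⟨b, ?_⟩
      rw [hC, h]
      ext x
      simp
    · right
      rw [hC, h]
      ext x
      simp only [Set.mem_setOf_eq, Set.mem_univ, iff_true]
      exact ⟨x - b, trivial, by ring⟩
  by_cases hall : ∀ i : Fin m, C i = Set.univ
  · exfalso
    have : (0 : 𝕜) ∈ ⋂ i : Fin m, C i := by
      simp only [Set.mem_iInter]
      intro i
      rw [hall i]
      trivial
    rw [hempty] at this
    exact this
  · push_neg at hall
    obtain ⟨i, hi⟩ := hall
    obtain ⟨b, hb⟩ | h := key i
    · have : b ∉ ⋂ j : Fin m, C j := by rw [hempty]; exact Set.notMem_empty b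
      simp only [Set.mem_iInter, not_forall] at this
      obtain ⟨j, hj⟩ := this
      refine ⟨i, j, ?_⟩
      ext x
      simp only [Set.mem_inter_iff, Set.mem_empty_iff_false, iff_false, not_and]
      intro hx
      rw [hb] at hx
      rw [Set.mem_singleton_iff] at hx
      subst hx
      exact hj
    · exact absurd h hi
end
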